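/- arXiv:2603.08598 — 2 statements merged into one kernel-verified Lean document; each statement's English description precedes it below -/
import Mathlib

section
/- Let s : ℕ → ℝ be a positive sequence with s(n) → ∞ and s(n)/log(s(n)) ~ √n as n → ∞ (ratio tends to 1). Then s(n) ~ (1/2)·√n·log n, i.e., s(n) / ((1/2)√n log n) → 1. -/
open Filter Real Topology

/-!
Taking logarithms in `s ≈ log s · √n` gives
`log s = log (s / (log s · √n)) + log log s + (log n) / 2`; after division by `log s` the first
two terms vanish in the limit, so `log s ~ (log n) / 2`, and substituting this back into
`s ≈ log s · √n` gives the claim.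
-/

lemma Real.log_eq_log_div_log_mul_add {x y : ℝ} (h : x / (log x * y) ≠ 0) :
    log x = log (x / (log x * y)) + log (log x) + log y := by
  have hden : log x * y ≠ 0 := by
    rintro hzero
    simp [hzero] at h
  rw [add_assoc, ← log_mul (left_ne_zero_of_mul hden) (right_ne_zero_of_mul hden),
    ← log_mul h hden, div_mul_cancel₀ x hden]

lemma tendsto_log_div_log_of_tendsto_div_log_mul {α : Type*} {l : Filter α} {f g : α → ℝ}
    (hf : Tendsto f l atTop) (h : Tendsto (fun a => f a / (log (f a) * g a)) l (𝓝 1)) :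
    Tendsto (fun a => log (f a) / log (g a)) l (𝓝 1) := by
  have hlog : Tendsto (fun a => log (f a)) l atTop := tendsto_log_atTop.comp hf
  have hlog_ratio : Tendsto (fun a => log (f a / (log (f a) * g a))) l (𝓝 0) := by
    simpa [Function.comp_def] using (continuousAt_log one_ne_zero).tendsto.comp h
  have hloglog : Tendsto (fun a => log (log (f a)) / log (f a)) l (𝓝 0) :=
    isLittleO_log_id_atTop.tendsto_div_nhds_zero.comp hlog
  have hsplit : ∀ᶠ a in l, 1 - log (f a / (log (f a) * g a)) * (log (f a))⁻¹
      - log (log (f a)) / log (f a) = log (g a) / log (f a) := by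
    filter_upwards [h.eventually_ne one_ne_zero, hlog.eventually_ne_atTop 0] with a ha hfa
    have hdecomp := Real.log_eq_log_div_log_mul_add ha
    field_simp
    linarith
  have hinv : Tendsto (fun a => log (g a) / log (f a)) l (𝓝 1) := by
    simpa using ((tendsto_const_nhds.sub (hlog_ratio.mul hlog.inv_tendsto_atTop)).sub
      hloglog).congr' hsplit
  simpa using hinv.inv₀ one_ne_zero

theorem stmt_12_general (s : ℕ → ℝ)
    (hinf : Filter.Tendsto s Filter.atTop Filter.atTop)
    (h : Filter.Tendsto (fun n : ℕ => s n / (Real.log (s n) * Real.sqrt n))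
      Filter.atTop (nhds 1)) :
    Filter.Tendsto (fun n : ℕ => s n / ((1 / 2) * Real.sqrt n * Real.log n))
      Filter.atTop (nhds 1) := by
  have hlog : Tendsto (fun n => log (s n) / log (√(n : ℝ))) atTop (𝓝 1) :=
    tendsto_log_div_log_of_tendsto_div_log_mul hinf h
  have hfactor : ∀ᶠ n : ℕ in atTop, s n / (log (s n) * √(n : ℝ)) * (log (s n) / log √(n : ℝ))
      = s n / ((1 / 2) * √(n : ℝ) * log n) := by
    filter_upwards [hinf.eventually_gt_atTop 1] with n hs
    have hlog_ne : log (s n) ≠ 0 := (log_pos hs).ne'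
    rw [log_sqrt n.cast_nonneg]
    field_simp
  simpa using (h.mul hlog).congr' hfactor

theorem stmt_12 (s : ℕ → ℝ) (hpos : ∀ᶠ n in Filter.atTop, 0 < s n)
    (hinf : Filter.Tendsto s Filter.atTop Filter.atTop)
    (h : Filter.Tendsto (fun n : ℕ => s n / (Real.log (s n) * Real.sqrt n))
      Filter.atTop (nhds 1)) :
    Filter.Tendsto (fun n : ℕ => s n / ((1 / 2) * Real.sqrt n * Real.log n))
      Filter.atTop (nhds 1) :=
  stmt_12_general s hinf h
end

section
/- Let s : ℕ → ℝ be a positive sequence with s(n) → ∞ and (s(n)/log s(n))^m ~ n as n → ∞, where m ≥ 1 is a fixed integer. Then s(n) ~ (1/m)·n^{1/m}·log n. -/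
/-!
Put `t = s / log s`. The hypothesis says `t ^ m ~ n`, so `t ~ n ^ (1/m)` and, taking logarithms
of quantities tending to infinity, `log t ~ (1/m) log n`. Since `log log s = o(log s)`, also
`log t = log s - log log s ~ log s`. Hence `s = t · log s ~ n ^ (1/m) · (1/m) log n`.
-/

open Filter Real Asymptotics Topology

theorem Real.tendsto_div_log_atTop : Tendsto (fun x : ℝ => x / log x) atTop atTop := by
  have hpos : ∀ᶠ x : ℝ in atTop, 0 < log x / x := by
    filter_upwards [eventually_gt_atTop 1] with x hx
    exact div_pos (log_pos hx) (by linarith)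
  have hzero : Tendsto (fun x : ℝ => log x / x) atTop (𝓝[>] 0) :=
    tendsto_nhdsWithin_iff.mpr ⟨isLittleO_log_id_atTop.tendsto_div_nhds_zero, hpos⟩
  simpa only [Pi.inv_def, inv_div] using hzero.inv_tendsto_nhdsGT_zero

theorem Real.isEquivalent_log_div_log : (fun x : ℝ => log (x / log x)) ~[atTop] log := by
  have hsmall : (fun x => log (log x)) =o[atTop] log :=
    isLittleO_log_id_atTop.comp_tendsto tendsto_log_atTop
  refine IsLittleO.isEquivalent (hsmall.neg_left.congr' ?_ EventuallyEq.rfl)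
  filter_upwards [eventually_gt_atTop 1] with x hx
  simp only [Pi.sub_apply, log_div (by positivity : x ≠ 0) (log_pos hx).ne']
  ring

theorem Asymptotics.IsEquivalent.of_div_log_pow {α : Type*} {l : Filter α} {u v : α → ℝ}
    {m : ℕ} (hm : m ≠ 0) (hu : Tendsto u l atTop) (hv : 0 ≤ v)
    (h : (fun x => (u x / Real.log (u x)) ^ m) ~[l] v) :
    u ~[l] fun x => (m : ℝ)⁻¹ * v x ^ (m⁻¹ : ℝ) * Real.log (v x) := by
  set t := fun x => u x / Real.log (u x)
  have ht : Tendsto t l atTop := tendsto_div_log_atTop.comp hu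
  have hv_top : Tendsto v l atTop := h.tendsto_atTop ((tendsto_pow_atTop hm).comp ht)
  have h_root : t ~[l] fun x => v x ^ (m⁻¹ : ℝ) := by
    refine (h.rpow hv).congr_left ?_
    filter_upwards [ht.eventually_ge_atTop 0] with x hx
    exact pow_rpow_inv_natCast hx hm
  have h_log_t : (fun x => Real.log (t x)) ~[l] fun x => (m : ℝ)⁻¹ * Real.log (v x) := by
    refine (h_root.symm.log ht).symm.congr_right ?_
    filter_upwards [hv_top.eventually_gt_atTop 0] with x hx
    exact log_rpow hx _
  have h_log_u : (fun x => Real.log (u x)) ~[l] fun x => (m : ℝ)⁻¹ * Real.log (v x) :=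
    (isEquivalent_log_div_log.comp_tendsto hu).symm.trans h_log_t
  refine ((h_root.mul h_log_u).congr_left ?_).congr_right (.of_eq ?_)
  · filter_upwards [(tendsto_log_atTop.comp hu).eventually_ne_atTop 0] with x hx
    exact div_mul_cancel₀ (u x) hx
  · ext x
    simp only [Pi.mul_apply]
    ring

theorem stmt_13_general (m : ℕ) (hm : 1 ≤ m) (s : ℕ → ℝ)
    (hinf : Filter.Tendsto s Filter.atTop Filter.atTop)
    (h : Filter.Tendsto (fun n : ℕ => (s n) ^ m / ((Real.log (s n)) ^ m * n))
      Filter.atTop (nhds 1)) :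
    Filter.Tendsto
      (fun n : ℕ => s n / ((1 / (m : ℝ)) * (n : ℝ) ^ ((1 : ℝ) / m) * Real.log n))
      Filter.atTop (nhds 1) := by
  have h_pow : (fun n => (s n / log (s n)) ^ m) ~[atTop] fun n : ℕ => (n : ℝ) :=
    isEquivalent_of_tendsto_one (h.congr fun n => by simp only [Pi.div_apply, div_pow, div_div])
  have key := IsEquivalent.of_div_log_pow (by omega) hinf (fun n => n.cast_nonneg) h_pow
  simp only [← one_div] at key
  refine (isEquivalent_iff_tendsto_one ?_).mp key
  filter_upwards [eventually_ge_atTop 2] with n hn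
  have h_log_pos : 0 < log (n : ℝ) := log_pos (by exact_mod_cast hn)
  positivity

theorem stmt_13 (m : ℕ) (hm : 1 ≤ m) (s : ℕ → ℝ) (hpos : ∀ᶠ n in Filter.atTop, 0 < s n)
    (hinf : Filter.Tendsto s Filter.atTop Filter.atTop)
    (h : Filter.Tendsto (fun n : ℕ => (s n) ^ m / ((Real.log (s n)) ^ m * n))
      Filter.atTop (nhds 1)) :
    Filter.Tendsto
      (fun n : ℕ => s n / ((1 / (m : ℝ)) * (n : ℝ) ^ ((1 : ℝ) / m) * Real.log n))
      Filter.atTop (nhds 1) :=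
  stmt_13_general m hm s hinf h
end
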